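/- arXiv:1112.3505 — 2 statements merged into one kernel-verified Lean document; each statement's English description precedes it below -/
import Mathlib

section
/- Let λ > 0, μ ∈ ℝ, and define ψ_λ(x) = λ√2 · sech(λx). Then the complex-valued function u(x,t) = √3 · e^{−itμ(3λ² − μ²) + iμx} · ψ_λ(x − (λ² − 3μ²)t) is a smooth solution of the complex KdV equation ∂_t u + ∂_x³ u = −|u|² ∂_x u on ℝ × ℝ. -/
noncomputable def kdvP0 (l y : ℝ) : ℝ := l * Real.sqrt 2 * (Real.cosh (l * y))⁻¹
noncomputable def kdvP1 (l y : ℝ) : ℝ :=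
  -(l ^ 2 * Real.sqrt 2 * Real.sinh (l * y) / Real.cosh (l * y) ^ 2)
noncomputable def kdvP2 (l y : ℝ) : ℝ := l ^ 2 * kdvP0 l y - kdvP0 l y ^ 3
noncomputable def kdvP3 (l y : ℝ) : ℝ := l ^ 2 * kdvP1 l y - 3 * kdvP0 l y ^ 2 * kdvP1 l y

lemma kdv_cosh_ne (x : ℝ) : Real.cosh x ≠ 0 := (Real.cosh_pos x).ne'

lemma kdv_hasDerivAt_cosh (l y : ℝ) :
    HasDerivAt (fun y => Real.cosh (l * y)) (l * Real.sinh (l * y)) y := by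
  have := (Real.hasDerivAt_cosh (l * y)).comp y ((hasDerivAt_id y).const_mul l)
  exact this.congr_deriv (by ring)

lemma kdv_hasDerivAt_sinh (l y : ℝ) :
    HasDerivAt (fun y => Real.sinh (l * y)) (l * Real.cosh (l * y)) y := by
  have := (Real.hasDerivAt_sinh (l * y)).comp y ((hasDerivAt_id y).const_mul l)
  exact this.congr_deriv (by ring)

lemma kdv_hasDerivAt_P0 (l y : ℝ) : HasDerivAt (kdvP0 l) (kdvP1 l y) y := by
  have h := ((kdv_hasDerivAt_cosh l y).inv (kdv_cosh_ne _)).const_mul (l * Real.sqrt 2)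
  refine h.congr_deriv ?_
  unfold kdvP1
  field_simp

lemma kdv_hasDerivAt_P1 (l y : ℝ) : HasDerivAt (kdvP1 l) (kdvP2 l y) y := by
  have hc := kdv_cosh_ne (l * y)
  have hpow := (kdv_hasDerivAt_cosh l y).pow 2
  have h := (((kdv_hasDerivAt_sinh l y).div hpow (pow_ne_zero 2 hc)).const_mul
      (l ^ 2 * Real.sqrt 2)).neg
  have hfun : (fun x => -(l ^ 2 * Real.sqrt 2 * (Real.sinh (l * x) / Real.cosh (l * x) ^ 2)))
      = kdvP1 l := funext fun x => by unfold kdvP1; ring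
  rw [← hfun]
  refine h.congr_deriv ?_
  have hs : Real.sinh (l * y) ^ 2 = Real.cosh (l * y) ^ 2 - 1 := by
    have := Real.cosh_sq_sub_sinh_sq (l * y); linarith
  have hr : Real.sqrt 2 ^ 2 = 2 := Real.sq_sqrt (by norm_num)
  simp only [Pi.pow_apply, Nat.cast_ofNat]
  rw [show (2 : ℕ) - 1 = 1 from rfl]
  unfold kdvP2 kdvP0
  field_simp
  linear_combination (2 * l ^ 3) * hs + (l ^ 3) * hr

lemma kdv_hasDerivAt_P2 (l y : ℝ) : HasDerivAt (kdvP2 l) (kdvP3 l y) y := by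
  have h := (((kdv_hasDerivAt_P0 l y).const_mul (l ^ 2)).sub ((kdv_hasDerivAt_P0 l y).pow 3))
  refine h.congr_deriv ?_
  norm_num [kdvP3]
lemma kdv_hasDerivAt_exp (f : ℝ → ℝ) (a s : ℝ) (hf : HasDerivAt f a s) :
    HasDerivAt (fun s => Complex.exp (Complex.I * ((f s : ℝ) : ℂ)))
      (Complex.I * a * Complex.exp (Complex.I * ((f s : ℝ) : ℂ))) s := by
  have h := (hf.ofReal_comp.const_mul Complex.I).cexp
  convert h using 1
  ring

/-- With `ψ_λ(x) = λ√2 sech(λx)`, the complex-valued function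
`u(x,t) = √3 e^{−itμ(3λ²−μ²) + iμx} ψ_λ(x − (λ²−3μ²)t)` is a smooth solution of the
complex KdV equation `∂ₜu + ∂ₓ³u = −|u|² ∂ₓu` on `ℝ × ℝ`. -/
theorem complex_kdv_traveling_wave (lam mu : ℝ) (hlam : 0 < lam)
    (ψ : ℝ → ℝ) (hψ : ψ = fun x => lam * Real.sqrt 2 * (1 / Real.cosh (lam * x)))
    (u : ℝ → ℝ → ℂ)
    (hu : u = fun (x t : ℝ) =>
      (Real.sqrt 3 : ℂ) *
        Complex.exp (Complex.I * ((-(t * mu * (3 * lam ^ 2 - mu ^ 2)) + mu * x : ℝ) : ℂ)) *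
        ((ψ (x - (lam ^ 2 - 3 * mu ^ 2) * t) : ℝ) : ℂ)) :
    ContDiff ℝ (⊤ : ℕ∞) (fun p : ℝ × ℝ => u p.1 p.2) ∧
    ∀ x t : ℝ,
      deriv (fun s => u x s) t + iteratedDeriv 3 (fun y => u y t) x
        = -((‖u x t‖ : ℂ)) ^ 2 * deriv (fun y => u y t) x := by
  subst hu hψ
  constructor
  · -- smoothness
    have hcosh : ContDiff ℝ (⊤ : ℕ∞)
        (fun p : ℝ × ℝ => Real.cosh (lam * (p.1 - (lam ^ 2 - 3 * mu ^ 2) * p.2))) :=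
      Real.contDiff_cosh.comp (by fun_prop)
    have hinv : ContDiff ℝ (⊤ : ℕ∞) (fun p : ℝ × ℝ =>
        lam * Real.sqrt 2 * (1 / Real.cosh (lam * (p.1 - (lam ^ 2 - 3 * mu ^ 2) * p.2)))) := by
      simp only [one_div]
      exact contDiff_const.mul (hcosh.inv fun p => (Real.cosh_pos _).ne')
    have harg : ContDiff ℝ (⊤ : ℕ∞) (fun p : ℝ × ℝ =>
        ((-(p.2 * mu * (3 * lam ^ 2 - mu ^ 2)) + mu * p.1 : ℝ) : ℂ)) :=
      Complex.ofRealCLM.contDiff.comp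
        ((((contDiff_snd.mul contDiff_const).mul contDiff_const).neg).add
          (contDiff_const.mul contDiff_fst))
    have hexp : ContDiff ℝ (⊤ : ℕ∞) (fun p : ℝ × ℝ =>
        Complex.exp (Complex.I * ((-(p.2 * mu * (3 * lam ^ 2 - mu ^ 2)) + mu * p.1 : ℝ) : ℂ))) :=
      ((Complex.contDiff_exp : ContDiff ℂ (⊤ : ℕ∞) Complex.exp).restrict_scalars ℝ).comp (contDiff_const.mul harg)
    exact (contDiff_const.mul hexp).mul (Complex.ofRealCLM.contDiff.comp hinv)
  · intro x t
    have sqrt3_sq : ((Real.sqrt 3 : ℝ) : ℂ) ^ 2 = 3 := by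
      have h3 : Real.sqrt 3 ^ 2 = 3 := Real.sq_sqrt (by norm_num)
      exact_mod_cast congrArg (fun r : ℝ => (r : ℂ)) h3
    set E : ℝ → ℂ := fun y =>
      Complex.exp (Complex.I * ((-(t * mu * (3 * lam ^ 2 - mu ^ 2)) + mu * y : ℝ) : ℂ)) with hEdef
    set G0 : ℝ → ℂ := fun y =>
      (Real.sqrt 3 : ℂ) * E y * ((kdvP0 lam (y - (lam ^ 2 - 3 * mu ^ 2) * t) : ℝ) : ℂ) with hG0
    set G1 : ℝ → ℂ := fun y =>
      (Real.sqrt 3 : ℂ) * E y *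
        (Complex.I * mu * ((kdvP0 lam (y - (lam ^ 2 - 3 * mu ^ 2) * t) : ℝ) : ℂ) +
          ((kdvP1 lam (y - (lam ^ 2 - 3 * mu ^ 2) * t) : ℝ) : ℂ)) with hG1
    set G2 : ℝ → ℂ := fun y =>
      (Real.sqrt 3 : ℂ) * E y *
        (-(mu : ℂ) ^ 2 * ((kdvP0 lam (y - (lam ^ 2 - 3 * mu ^ 2) * t) : ℝ) : ℂ) +
          2 * Complex.I * mu * ((kdvP1 lam (y - (lam ^ 2 - 3 * mu ^ 2) * t) : ℝ) : ℂ) +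
          ((kdvP2 lam (y - (lam ^ 2 - 3 * mu ^ 2) * t) : ℝ) : ℂ)) with hG2
    set G3 : ℝ → ℂ := fun y =>
      (Real.sqrt 3 : ℂ) * E y *
        (-(Complex.I * (mu : ℂ) ^ 3 * ((kdvP0 lam (y - (lam ^ 2 - 3 * mu ^ 2) * t) : ℝ) : ℂ)) -
          3 * (mu : ℂ) ^ 2 * ((kdvP1 lam (y - (lam ^ 2 - 3 * mu ^ 2) * t) : ℝ) : ℂ) +
          3 * Complex.I * mu * ((kdvP2 lam (y - (lam ^ 2 - 3 * mu ^ 2) * t) : ℝ) : ℂ) +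
          ((kdvP3 lam (y - (lam ^ 2 - 3 * mu ^ 2) * t) : ℝ) : ℂ)) with hG3
    have hE : ∀ y : ℝ, HasDerivAt E (Complex.I * mu * E y) y := by
      intro y
      have hf : HasDerivAt (fun y : ℝ => -(t * mu * (3 * lam ^ 2 - mu ^ 2)) + mu * y) mu y := by
        simpa using (((hasDerivAt_id y).const_mul mu).const_add
          (-(t * mu * (3 * lam ^ 2 - mu ^ 2))))
      exact kdv_hasDerivAt_exp _ mu y hf
    have hP0x : ∀ y : ℝ, HasDerivAt
        (fun y : ℝ => ((kdvP0 lam (y - (lam ^ 2 - 3 * mu ^ 2) * t) : ℝ) : ℂ))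
        ((kdvP1 lam (y - (lam ^ 2 - 3 * mu ^ 2) * t) : ℝ) : ℂ) y := by
      intro y
      have h := (kdv_hasDerivAt_P0 lam (y - (lam ^ 2 - 3 * mu ^ 2) * t)).comp y
        ((hasDerivAt_id y).sub_const ((lam ^ 2 - 3 * mu ^ 2) * t))
      simpa using h.ofReal_comp
    have hP1x : ∀ y : ℝ, HasDerivAt
        (fun y : ℝ => ((kdvP1 lam (y - (lam ^ 2 - 3 * mu ^ 2) * t) : ℝ) : ℂ))
        ((kdvP2 lam (y - (lam ^ 2 - 3 * mu ^ 2) * t) : ℝ) : ℂ) y := by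
      intro y
      have h := (kdv_hasDerivAt_P1 lam (y - (lam ^ 2 - 3 * mu ^ 2) * t)).comp y
        ((hasDerivAt_id y).sub_const ((lam ^ 2 - 3 * mu ^ 2) * t))
      simpa using h.ofReal_comp
    have hP2x : ∀ y : ℝ, HasDerivAt
        (fun y : ℝ => ((kdvP2 lam (y - (lam ^ 2 - 3 * mu ^ 2) * t) : ℝ) : ℂ))
        ((kdvP3 lam (y - (lam ^ 2 - 3 * mu ^ 2) * t) : ℝ) : ℂ) y := by
      intro y
      have h := (kdv_hasDerivAt_P2 lam (y - (lam ^ 2 - 3 * mu ^ 2) * t)).comp y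
        ((hasDerivAt_id y).sub_const ((lam ^ 2 - 3 * mu ^ 2) * t))
      simpa using h.ofReal_comp
    have hd0 : ∀ y : ℝ, HasDerivAt G0 (G1 y) y := by
      intro y
      have h := ((hE y).const_mul (Real.sqrt 3 : ℂ)).mul (hP0x y)
      rw [hG0, hG1]
      refine h.congr_deriv ?_
      ring
    have hd1 : ∀ y : ℝ, HasDerivAt G1 (G2 y) y := by
      intro y
      have h := ((hE y).const_mul (Real.sqrt 3 : ℂ)).mul
        (((hP0x y).const_mul (Complex.I * mu)).add (hP1x y))
      rw [hG1, hG2]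
      refine h.congr_deriv ?_
      simp only [Pi.add_apply]
      linear_combination ((Real.sqrt 3 : ℂ) * E y * (mu : ℂ) ^ 2 *
        ((kdvP0 lam (y - (lam ^ 2 - 3 * mu ^ 2) * t) : ℝ) : ℂ)) * Complex.I_sq
    have hd2 : ∀ y : ℝ, HasDerivAt G2 (G3 y) y := by
      intro y
      have h := ((hE y).const_mul (Real.sqrt 3 : ℂ)).mul
        ((((hP0x y).const_mul (-(mu : ℂ) ^ 2)).add
          ((hP1x y).const_mul (2 * Complex.I * mu))).add (hP2x y))
      rw [hG2, hG3]
      refine h.congr_deriv ?_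
      simp only [Pi.add_apply]
      linear_combination ((Real.sqrt 3 : ℂ) * E y * 2 * (mu : ℂ) ^ 2 *
        ((kdvP1 lam (y - (lam ^ 2 - 3 * mu ^ 2) * t) : ℝ) : ℂ)) * Complex.I_sq
    have hfx : (fun y => (Real.sqrt 3 : ℂ) *
        Complex.exp (Complex.I * ((-(t * mu * (3 * lam ^ 2 - mu ^ 2)) + mu * y : ℝ) : ℂ)) *
        ((lam * Real.sqrt 2 *
          (1 / Real.cosh (lam * (y - (lam ^ 2 - 3 * mu ^ 2) * t))) : ℝ) : ℂ)) = G0 := by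
      funext y
      rw [hG0, hEdef]
      simp [kdvP0, one_div]
    have e1 : deriv G0 = G1 := funext fun y => (hd0 y).deriv
    have e2 : deriv G1 = G2 := funext fun y => (hd1 y).deriv
    have e3 : deriv G2 = G3 := funext fun y => (hd2 y).deriv
    have e : iteratedDeriv 3 G0 x = G3 x := by
      rw [show (3 : ℕ) = 2 + 1 from rfl, iteratedDeriv_succ,
        show (2 : ℕ) = 1 + 1 from rfl, iteratedDeriv_succ, iteratedDeriv_one, e1, e2, e3]
    -- time derivative
    have hf : HasDerivAt (fun s : ℝ => -(s * mu * (3 * lam ^ 2 - mu ^ 2)) + mu * x)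
        (-(mu * (3 * lam ^ 2 - mu ^ 2))) t := by
      have hfun : (fun s : ℝ => -(s * mu * (3 * lam ^ 2 - mu ^ 2)) + mu * x)
          = fun s : ℝ => -(mu * (3 * lam ^ 2 - mu ^ 2)) * s + mu * x := by
        funext s; ring
      rw [hfun]
      simpa using ((hasDerivAt_id t).const_mul
        (-(mu * (3 * lam ^ 2 - mu ^ 2)))).add_const (mu * x)
    have hexp_t := kdv_hasDerivAt_exp _ _ t hf
    have hin : HasDerivAt (fun s : ℝ => x - (lam ^ 2 - 3 * mu ^ 2) * s)
        (-(lam ^ 2 - 3 * mu ^ 2)) t := by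
      have h' := ((hasDerivAt_id t).const_mul (lam ^ 2 - 3 * mu ^ 2)).const_sub x
      refine h'.congr_deriv ?_
      simp
    have hP0t : HasDerivAt
        (fun s : ℝ => ((kdvP0 lam (x - (lam ^ 2 - 3 * mu ^ 2) * s) : ℝ) : ℂ))
        (((kdvP1 lam (x - (lam ^ 2 - 3 * mu ^ 2) * t) : ℝ) : ℂ) *
          (3 * (mu : ℂ) ^ 2 - (lam : ℂ) ^ 2)) t := by
      have h := ((kdv_hasDerivAt_P0 lam (x - (lam ^ 2 - 3 * mu ^ 2) * t)).comp t hin).ofReal_comp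
      simpa [Function.comp] using h
    have hft : (fun s => (Real.sqrt 3 : ℂ) *
        Complex.exp (Complex.I * ((-(s * mu * (3 * lam ^ 2 - mu ^ 2)) + mu * x : ℝ) : ℂ)) *
        ((lam * Real.sqrt 2 *
          (1 / Real.cosh (lam * (x - (lam ^ 2 - 3 * mu ^ 2) * s))) : ℝ) : ℂ))
        = fun s => (Real.sqrt 3 : ℂ) *
          Complex.exp (Complex.I * ((-(s * mu * (3 * lam ^ 2 - mu ^ 2)) + mu * x : ℝ) : ℂ)) *
          ((kdvP0 lam (x - (lam ^ 2 - 3 * mu ^ 2) * s) : ℝ) : ℂ) := by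
      funext s; simp [kdvP0, one_div]
    have hdt := (hexp_t.const_mul (Real.sqrt 3 : ℂ)).mul hP0t
    simp only [Pi.mul_def] at hdt
    -- |u| squared
    have hP0pos : 0 < kdvP0 lam (x - (lam ^ 2 - 3 * mu ^ 2) * t) := by
      unfold kdvP0
      positivity
    have habs : ((‖((Real.sqrt 3 : ℂ) *
        Complex.exp (Complex.I * ((-(t * mu * (3 * lam ^ 2 - mu ^ 2)) + mu * x : ℝ) : ℂ)) *
        ((lam * Real.sqrt 2 *
          (1 / Real.cosh (lam * (x - (lam ^ 2 - 3 * mu ^ 2) * t))) : ℝ) : ℂ))‖ : ℝ) : ℂ) ^ 2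
        = 3 * ((kdvP0 lam (x - (lam ^ 2 - 3 * mu ^ 2) * t) : ℝ) : ℂ) ^ 2 := by
      have h1 : ‖((Real.sqrt 3 : ℂ) *
          Complex.exp (Complex.I * ((-(t * mu * (3 * lam ^ 2 - mu ^ 2)) + mu * x : ℝ) : ℂ)) *
          ((lam * Real.sqrt 2 *
            (1 / Real.cosh (lam * (x - (lam ^ 2 - 3 * mu ^ 2) * t))) : ℝ) : ℂ))‖
          = Real.sqrt 3 * kdvP0 lam (x - (lam ^ 2 - 3 * mu ^ 2) * t) := by
        have hre : (Complex.I *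
            ((-(t * mu * (3 * lam ^ 2 - mu ^ 2)) + mu * x : ℝ) : ℂ)).re = 0 := by
          simp only [Complex.mul_re, Complex.I_re, Complex.I_im, Complex.ofReal_re,
            Complex.ofReal_im]
          ring
        have hpos2 : 0 < lam * Real.sqrt 2 *
            (1 / Real.cosh (lam * (x - (lam ^ 2 - 3 * mu ^ 2) * t))) := by positivity
        rw [norm_mul, norm_mul, Complex.norm_real, Complex.norm_real, Complex.norm_exp, hre,
          Real.exp_zero, Real.norm_eq_abs, Real.norm_eq_abs, abs_of_nonneg (Real.sqrt_nonneg 3), abs_of_pos hpos2]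
        simp only [one_div]
        unfold kdvP0
        ring
      rw [h1]
      push_cast
      linear_combination ((kdvP0 lam (x - (lam ^ 2 - 3 * mu ^ 2) * t) : ℂ)) ^ 2 * sqrt3_sq
    simp only
    rw [hfx, hft, habs, e, e1, hdt.deriv]
    rw [hG1, hG3, hEdef]
    simp only [kdvP2, kdvP3]
    push_cast
    ring
end

section
/- There exists a function φ₀ ∈ C⁶(ℝ) that is even and positive, with φ₀'(r) = r for 0 ≤ r ≤ 3/2, φ₀'(r) = 2 − (log 2)/(4 log r) for r ≥ 2, 0 < φ₀''(r) ≤ 1 for all r ≥ 0 with φ₀'' decreasing on (3/2, ∞), and a constant c₀ > 0 such that |φ₀⁽ᵏ⁾(r)| ≤ c₀ φ₀''(r) for k = 3, 4, 5, 6 and all r. -/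
/-!
The weight is built from its second derivative. Put `ψ x = log 2 / (4 x log² x)`, the derivative
of `2 - log 2 / (4 log x)`; on `(3/2, ∞)` it is positive, at most `1` and decreasing. With a
smooth nondecreasing cutoff `χ` that vanishes on `(-∞, 3/2]` and equals `1` on `[19/10, ∞)`, the
function `φ₀''(r) = 1 + (ψ |r| - 1) χ |r|` is even, lies in `(0, 1]`, is decreasing beyond `3/2`,
equals `1` on `[-3/2, 3/2]` and `ψ` beyond `19/10`. Taking `χ` a convex combination of two shifted
transition functions makes `∫₀² φ₀''` affine in the coefficient, which can therefore be chosen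
with `∫₀² φ₀'' = 7/4 = 2 - log 2 / (4 log 2)`; then `φ₀'(r) = ∫₀ʳ φ₀''` has the prescribed form
for `r ≥ 2`.

For the bounds `|φ₀⁽ᵏ⁾| ≤ c₀ φ₀''`: on a compact set they hold because `φ₀''` is continuous and
positive; for `r ≥ 2` because every derivative of `ψ` lies in the span of the functions
`x⁻ᵃ (log x)⁻ᵇ` with `a ≥ 1`, `b ≥ 2`, each of which is `O(ψ)` there.
-/

open Real Set MeasureTheory
open scoped ContDiff

namespace CarlemanWeight

lemma integral_zero_neg_of_even {f : ℝ → ℝ} (hf : ∀ x, f (-x) = f x) (r : ℝ) :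
    ∫ x in (0 : ℝ)..(-r), f x = -∫ x in (0 : ℝ)..r, f x := by
  have h := intervalIntegral.integral_comp_neg (a := 0) (b := r) f
  simp only [hf, neg_zero] at h
  rw [intervalIntegral.integral_symm, h]

lemma integral_zero_neg_of_odd {f : ℝ → ℝ} (hf : ∀ x, f (-x) = -f x) (r : ℝ) :
    ∫ x in (0 : ℝ)..(-r), f x = ∫ x in (0 : ℝ)..r, f x := by
  have h := intervalIntegral.integral_comp_neg (a := 0) (b := r) f
  simp only [hf, neg_zero, intervalIntegral.integral_neg] at h
  rw [intervalIntegral.integral_symm, ← h, neg_neg]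

lemma abs_iteratedDeriv_abs_of_even {f : ℝ → ℝ} (hf : ∀ x, f (-x) = f x) (n : ℕ)
    (x : ℝ) :
    |iteratedDeriv n f (|x|)| = |iteratedDeriv n f x| := by
  rcases abs_choice x with hx | hx <;> rw [hx]
  have h := iteratedDeriv_comp_neg n f x
  simp only [hf, smul_eq_mul] at h
  rw [h, abs_mul, abs_pow, abs_neg, abs_one, one_pow, one_mul]

lemma contDiff_infty_integral {f : ℝ → ℝ} (hf : ContDiff ℝ ∞ f) (a : ℝ) :
    ContDiff ℝ ∞ fun x => ∫ t in a..x, f t :=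
  contDiff_infty_iff_deriv.2
    ⟨fun x => (hf.continuous.integral_hasStrictDerivAt a x).hasDerivAt.differentiableAt,
      by rwa [funext (hf.continuous.deriv_integral f a)]⟩

lemma exists_abs_le_mul_of_isCompact {X : Type*} [TopologicalSpace X] {f g : X → ℝ} {K : Set X}
    (hK : IsCompact K) (hf : ContinuousOn f K) (hg : ContinuousOn g K) (hg_pos : ∀ x, 0 < g x)
    {C : ℝ} (hC : ∀ x ∉ K, |f x| ≤ C * g x) : ∃ C', ∀ x, |f x| ≤ C' * g x := by
  obtain ⟨M, hM⟩ := hK.exists_bound_of_continuousOn (hf.div hg fun x _ => (hg_pos x).ne')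
  refine ⟨max C M, fun x => ?_⟩
  by_cases hx : x ∈ K
  · have h := hM x hx
    rw [Real.norm_eq_abs, Pi.div_apply, abs_div, abs_of_pos (hg_pos x),
      div_le_iff₀ (hg_pos x)] at h
    exact h.trans (mul_le_mul_of_nonneg_right (le_max_right C M) (hg_pos x).le)
  · exact (hC x hx).trans (mul_le_mul_of_nonneg_right (le_max_left C M) (hg_pos x).le)

lemma exists_pos_forall_le_mul {X : Type*} {g : X → ℝ} (hg : ∀ x, 0 ≤ g x)
    {P : ℕ → X → ℝ} (hP : ∀ n, ∃ C, ∀ x, P n x ≤ C * g x) (N : ℕ) :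
    ∃ C, 0 < C ∧ ∀ n ≤ N, ∀ x, P n x ≤ C * g x := by
  choose C hC using hP
  refine ⟨1 + ∑ n ∈ Finset.range (N + 1), |C n|, by positivity, fun n hn x => ?_⟩
  have hCn : C n ≤ 1 + ∑ n ∈ Finset.range (N + 1), |C n| :=
    (le_abs_self _).trans <| (Finset.single_le_sum (f := fun n => |C n|)
      (fun _ _ => abs_nonneg _) (Finset.mem_range.2 (by omega))).trans
        (le_add_of_nonneg_left zero_le_one)
  exact (hC n x).trans (mul_le_mul_of_nonneg_right hCn (hg x))

noncomputable def invLogMonomial (a b : ℕ) (x : ℝ) : ℝ := x⁻¹ ^ a * (log x)⁻¹ ^ b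

lemma invLogMonomial_nonneg (a b : ℕ) {x : ℝ} (hx : 1 ≤ x) : 0 ≤ invLogMonomial a b x := by
  have := log_nonneg hx
  unfold invLogMonomial
  positivity

lemma hasDerivAt_invLogMonomial (a b : ℕ) {x : ℝ} (hx : 1 < x) :
    HasDerivAt (invLogMonomial a b)
      (-(a * invLogMonomial (a + 1) b x + b * invLogMonomial (a + 1) (b + 1) x)) x := by
  have hx0 : x ≠ 0 := by positivity
  have hlog : log x ≠ 0 := (log_pos hx).ne'
  have h : HasDerivAt (fun y => y⁻¹ ^ a * (log y)⁻¹ ^ b) _ x :=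
    ((hasDerivAt_inv hx0).pow a).mul (((hasDerivAt_log hx0).inv hlog).pow b)
  refine h.congr_deriv ?_
  simp only [invLogMonomial]
  rcases a with _ | a <;> rcases b with _ | b <;> simp [field, pow_succ]
  ring

lemma invLogMonomial_le {x : ℝ} (hx : 2 ≤ x) (a b : ℕ) :
    invLogMonomial (a + 1) (b + 2) x ≤ 2 ^ b * invLogMonomial 1 2 x := by
  have hlog : 1 / 2 < log x :=
    (by linarith [log_two_gt_d9] : (1 / 2 : ℝ) < log 2).trans_le (log_le_log two_pos hx)
  have hxinv : x⁻¹ ^ a ≤ 1 :=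
    pow_le_one₀ (by positivity) (inv_le_one_of_one_le₀ (by linarith))
  have hloginv : (log x)⁻¹ ^ b ≤ 2 ^ b :=
    pow_le_pow_left₀ (by positivity) ((inv_le_comm₀ (by linarith) two_pos).2 (by linarith)) b
  calc invLogMonomial (a + 1) (b + 2) x
      = x⁻¹ ^ a * (log x)⁻¹ ^ b * invLogMonomial 1 2 x := by
        simp only [invLogMonomial]; ring
    _ ≤ 1 * 2 ^ b * invLogMonomial 1 2 x := by
        gcongr
        · exact invLogMonomial_nonneg 1 2 (by linarith)
    _ = 2 ^ b * invLogMonomial 1 2 x := by ring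

def invLogSpan : Submodule ℝ (ℝ → ℝ) :=
  Submodule.span ℝ (range fun p : ℕ × ℕ => invLogMonomial (p.1 + 1) (p.2 + 2))

lemma invLogMonomial_mem_invLogSpan (a b : ℕ) :
    invLogMonomial (a + 1) (b + 2) ∈ invLogSpan :=
  Submodule.subset_span ⟨(a, b), rfl⟩

lemma exists_hasDerivAt_of_mem_invLogSpan {f : ℝ → ℝ} (hf : f ∈ invLogSpan) :
    ∃ g ∈ invLogSpan, ∀ x, 1 < x → HasDerivAt f (g x) x := by
  induction hf using Submodule.span_induction with
  | mem f hf =>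
    obtain ⟨⟨a, b⟩, rfl⟩ := hf
    refine ⟨-(((a + 1 : ℕ) : ℝ) • invLogMonomial (a + 2) (b + 2) +
      ((b + 2 : ℕ) : ℝ) • invLogMonomial (a + 2) (b + 3)), ?_, fun x hx => ?_⟩
    · exact neg_mem (add_mem (Submodule.smul_mem _ _ (invLogMonomial_mem_invLogSpan (a + 1) b))
        (Submodule.smul_mem _ _ (invLogMonomial_mem_invLogSpan (a + 1) (b + 1))))
    · simpa using hasDerivAt_invLogMonomial (a + 1) (b + 2) hx
  | zero => exact ⟨0, zero_mem _, fun x _ => hasDerivAt_const x (0 : ℝ)⟩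
  | add f g _ _ hf hg =>
    obtain ⟨f', hf'_mem, hf'⟩ := hf
    obtain ⟨g', hg'_mem, hg'⟩ := hg
    exact ⟨f' + g', add_mem hf'_mem hg'_mem, fun x hx => (hf' x hx).add (hg' x hx)⟩
  | smul c f _ hf =>
    obtain ⟨f', hf'_mem, hf'⟩ := hf
    exact ⟨c • f', Submodule.smul_mem _ c hf'_mem, fun x hx => (hf' x hx).const_smul c⟩

lemma exists_eqOn_iteratedDeriv_of_mem_invLogSpan {f : ℝ → ℝ} (hf : f ∈ invLogSpan)
    (n : ℕ) :
    ∃ g ∈ invLogSpan, EqOn (iteratedDeriv n f) g (Ioi 1) := by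
  induction n with
  | zero => exact ⟨f, hf, fun x _ => by simp⟩
  | succ n ih =>
    obtain ⟨g, hg_mem, hfg⟩ := ih
    obtain ⟨g', hg'_mem, hg'⟩ := exists_hasDerivAt_of_mem_invLogSpan hg_mem
    refine ⟨g', hg'_mem, fun x hx => ?_⟩
    rw [iteratedDeriv_succ, (hfg.eventuallyEq_of_mem (isOpen_Ioi.mem_nhds hx)).deriv_eq]
    exact (hg' x hx).deriv

lemma exists_abs_le_of_mem_invLogSpan {f : ℝ → ℝ} (hf : f ∈ invLogSpan) :
    ∃ C, ∀ x, 2 ≤ x → |f x| ≤ C * invLogMonomial 1 2 x := by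
  induction hf using Submodule.span_induction with
  | mem f hf =>
    obtain ⟨⟨a, b⟩, rfl⟩ := hf
    refine ⟨2 ^ b, fun x hx => ?_⟩
    rw [abs_of_nonneg (invLogMonomial_nonneg _ _ (by linarith))]
    exact invLogMonomial_le hx a b
  | zero => exact ⟨0, fun x _ => by simp⟩
  | add f g _ _ hf hg =>
    obtain ⟨C, hC⟩ := hf
    obtain ⟨D, hD⟩ := hg
    exact ⟨C + D, fun x hx => (abs_add_le _ _).trans (by linarith [hC x hx, hD x hx])⟩
  | smul c f _ hf =>
    obtain ⟨C, hC⟩ := hf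
    refine ⟨|c| * C, fun x hx => ?_⟩
    rw [Pi.smul_apply, smul_eq_mul, abs_mul, mul_assoc]
    exact mul_le_mul_of_nonneg_left (hC x hx) (abs_nonneg c)

noncomputable def tailDensity (x : ℝ) : ℝ := log 2 / (4 * x * log x ^ 2)

lemma tailDensity_eq_smul : tailDensity = (log 2 / 4) • invLogMonomial 1 2 := by
  ext x
  simp only [tailDensity, invLogMonomial, Pi.smul_apply, smul_eq_mul]
  ring

lemma tailDensity_pos {x : ℝ} (hx : 1 < x) : 0 < tailDensity x := by
  have := log_pos hx
  have := log_pos one_lt_two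
  unfold tailDensity
  positivity

lemma antitoneOn_tailDensity : AntitoneOn tailDensity (Ioi 1) := by
  intro x hx y hy hxy
  have hx1 : 1 < x := hx
  have := log_pos hx1
  have : log x ≤ log y := log_le_log (by linarith) hxy
  unfold tailDensity
  exact div_le_div_of_nonneg_left (log_nonneg one_le_two) (by positivity)
    (by gcongr; linarith)

lemma tailDensity_le_one {x : ℝ} (hx : 3 / 2 ≤ x) : tailDensity x ≤ 1 := by
  have hlog : 11 / 30 ≤ log (3 / 2) := by
    have h65 := one_sub_inv_le_log_of_pos (x := 6 / 5) (by norm_num)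
    have h54 := one_sub_inv_le_log_of_pos (x := 5 / 4) (by norm_num)
    rw [show (3 / 2 : ℝ) = 6 / 5 * (5 / 4) by norm_num, log_mul (by norm_num) (by norm_num)]
    norm_num at h65 h54
    linarith
  calc tailDensity x ≤ tailDensity (3 / 2) :=
        antitoneOn_tailDensity (by norm_num : (3 / 2 : ℝ) ∈ Ioi 1)
          (show x ∈ Ioi 1 from lt_of_lt_of_le (by norm_num) hx) hx
    _ ≤ 1 := by
        rw [tailDensity, div_le_one (by positivity)]
        nlinarith [log_two_lt_d9]

lemma contDiffAt_tailDensity {n : ℕ∞ω} {x : ℝ} (hx : 1 < x) :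
    ContDiffAt ℝ n tailDensity x := by
  have hx0 : x ≠ 0 := by positivity
  have := log_pos hx
  exact contDiffAt_const.div ((contDiffAt_const.mul contDiffAt_id).mul
    ((contDiffAt_log.2 hx0).pow 2)) (by positivity)

lemma hasDerivAt_two_sub_div_log {x : ℝ} (hx : 1 < x) :
    HasDerivAt (fun t => 2 - log 2 / (4 * log t)) (tailDensity x) x := by
  have hx0 : x ≠ 0 := by positivity
  have := (log_pos hx).ne'
  have h := (((hasDerivAt_log hx0).const_mul 4).inv (by positivity)).const_mul (log 2)
  refine (h.const_sub 2).congr_deriv ?_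
  simp only [tailDensity]
  field_simp

lemma intervalIntegrable_tailDensity {a b : ℝ} (ha : 1 < a) (hb : 1 < b) :
    IntervalIntegrable tailDensity volume a b :=
  ContinuousOn.intervalIntegrable fun _ ht =>
    (contDiffAt_tailDensity (n := 0) ((lt_min ha hb).trans_le ht.1)).continuousAt.continuousWithinAt

lemma integral_tailDensity {a b : ℝ} (ha : 1 < a) (hab : a ≤ b) :
    ∫ t in a..b, tailDensity t = log 2 / (4 * log a) - log 2 / (4 * log b) := by
  rw [intervalIntegral.integral_eq_sub_of_hasDerivAt (f := fun t => 2 - log 2 / (4 * log t))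
    (fun t ht => hasDerivAt_two_sub_div_log (ha.trans_le (uIcc_of_le hab ▸ ht).1))
    (intervalIntegrable_tailDensity ha (ha.trans_le hab))]
  ring

lemma exists_abs_iteratedDeriv_tailDensity_le (n : ℕ) :
    ∃ C, ∀ x, 2 ≤ x → |iteratedDeriv n tailDensity x| ≤ C * tailDensity x := by
  have hmem : tailDensity ∈ invLogSpan :=
    tailDensity_eq_smul ▸ Submodule.smul_mem _ _ (invLogMonomial_mem_invLogSpan 0 0)
  obtain ⟨g, hg_mem, hg⟩ := exists_eqOn_iteratedDeriv_of_mem_invLogSpan hmem n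
  obtain ⟨C, hC⟩ := exists_abs_le_of_mem_invLogSpan hg_mem
  refine ⟨C / (log 2 / 4), fun x hx => ?_⟩
  have := log_pos one_lt_two
  rw [hg (show x ∈ Ioi 1 by simp only [mem_Ioi]; linarith), tailDensity_eq_smul, Pi.smul_apply,
    smul_eq_mul, ← mul_assoc, div_mul_cancel₀ _ (by positivity)]
  exact hC x hx

noncomputable def cutoff (a x : ℝ) : ℝ :=
  a * smoothTransition (10 * (x - 3 / 2)) + (1 - a) * smoothTransition (10 * (x - 9 / 5))

lemma contDiff_cutoff (a : ℝ) : ContDiff ℝ ∞ (cutoff a) := by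
  unfold cutoff
  have := smoothTransition.contDiff (n := ⊤)
  fun_prop

lemma cutoff_eq_zero_of_le (a : ℝ) {x : ℝ} (hx : x ≤ 3 / 2) : cutoff a x = 0 := by
  rw [cutoff, smoothTransition.zero_of_nonpos (by linarith),
    smoothTransition.zero_of_nonpos (by linarith)]
  ring

lemma cutoff_eq_one_of_ge (a : ℝ) {x : ℝ} (hx : 19 / 10 ≤ x) : cutoff a x = 1 := by
  rw [cutoff, smoothTransition.one_of_one_le (by linarith),
    smoothTransition.one_of_one_le (by linarith)]
  ring

lemma cutoff_one_eq_one_of_ge {x : ℝ} (hx : 8 / 5 ≤ x) : cutoff 1 x = 1 := by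
  rw [cutoff, smoothTransition.one_of_one_le (x := 10 * (x - 3 / 2)) (by linarith)]
  ring

lemma cutoff_zero_eq_zero_of_le {x : ℝ} (hx : x ≤ 9 / 5) : cutoff 0 x = 0 := by
  rw [cutoff, smoothTransition.zero_of_nonpos (x := 10 * (x - 9 / 5)) (by linarith)]
  ring

lemma monotone_cutoff {a : ℝ} (ha : a ∈ Icc 0 1) : Monotone (cutoff a) := fun x y hxy => by
  obtain ⟨ha0, ha1⟩ := ha
  unfold cutoff
  gcongr <;> first | linarith | exact smoothTransition.monotone (by linarith)

lemma cutoff_nonneg {a : ℝ} (ha : a ∈ Icc 0 1) (x : ℝ) : 0 ≤ cutoff a x := by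
  obtain ⟨ha0, ha1⟩ := ha
  unfold cutoff
  have := smoothTransition.nonneg (10 * (x - 3 / 2))
  have := smoothTransition.nonneg (10 * (x - 9 / 5))
  have : 0 ≤ 1 - a := by linarith
  positivity

lemma cutoff_le_one {a : ℝ} (ha : a ∈ Icc 0 1) (x : ℝ) : cutoff a x ≤ 1 := by
  obtain ⟨ha0, ha1⟩ := ha
  unfold cutoff
  nlinarith [smoothTransition.le_one (10 * (x - 3 / 2)), smoothTransition.le_one (10 * (x - 9 / 5))]

noncomputable def profile (a x : ℝ) : ℝ := (tailDensity x - 1) * cutoff a x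

lemma profile_eq_zero_of_le (a : ℝ) {x : ℝ} (hx : x ≤ 3 / 2) : profile a x = 0 := by
  rw [profile, cutoff_eq_zero_of_le a hx, mul_zero]

lemma profile_eq_of_ge (a : ℝ) {x : ℝ} (hx : 19 / 10 ≤ x) :
    profile a x = tailDensity x - 1 := by
  rw [profile, cutoff_eq_one_of_ge a hx, mul_one]

lemma profile_eq_add (a x : ℝ) : profile a x = a * profile 1 x + (1 - a) * profile 0 x := by
  simp only [profile, cutoff]
  ring

lemma contDiff_profile (a : ℝ) : ContDiff ℝ ∞ (profile a) := by
  refine contDiff_iff_contDiffAt.2 fun x => ?_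
  rcases lt_or_ge x (3 / 2) with hx | hx
  · exact contDiffAt_const.congr_of_eventuallyEq
      ((eventually_lt_nhds hx).mono fun y hy => profile_eq_zero_of_le a hy.le)
  · exact ((contDiffAt_tailDensity (by linarith)).sub contDiffAt_const).mul
      (contDiff_cutoff a).contDiffAt

lemma one_add_profile_mem_Ioc {a : ℝ} (ha : a ∈ Icc 0 1) (x : ℝ) :
    1 + profile a x ∈ Ioc 0 1 := by
  rcases le_or_gt x (3 / 2) with hx | hx
  · simp [profile_eq_zero_of_le a hx]
  · have hψ_pos := tailDensity_pos (by linarith : (1 : ℝ) < x)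
    have hψ_le := tailDensity_le_one hx.le
    have hχ_nonneg := cutoff_nonneg ha x
    have hχ_le := cutoff_le_one ha x
    constructor <;> simp only [profile] <;> nlinarith

lemma antitoneOn_one_add_profile {a : ℝ} (ha : a ∈ Icc 0 1) :
    AntitoneOn (fun x => 1 + profile a x) (Ioi (3 / 2)) := by
  intro x hx y hy hxy
  have hx' : (3 / 2 : ℝ) ≤ x := le_of_lt hx
  have hψ : tailDensity y ≤ tailDensity x :=
    antitoneOn_tailDensity (mem_Ioi.2 (by linarith)) (mem_Ioi.2 (by linarith [mem_Ioi.1 hy])) hxy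
  have hdecay : (1 - tailDensity x) * cutoff a x ≤ (1 - tailDensity y) * cutoff a y :=
    mul_le_mul (by linarith) (monotone_cutoff ha hxy) (cutoff_nonneg ha x)
      (by linarith [tailDensity_le_one (hx'.trans hxy)])
  simp only [profile]
  linarith

noncomputable def profileIntegral (a : ℝ) : ℝ := ∫ x in (0 : ℝ)..2, profile a x

lemma neg_quarter_le_profileIntegral_zero : -(1 / 4) ≤ profileIntegral 0 := by
  have hint (u v : ℝ) : IntervalIntegrable (profile 0) volume u v :=
    (contDiff_profile 0).continuous.intervalIntegrable u v
  have hvanish : ∫ x in (0 : ℝ)..(9 / 5), profile 0 x = 0 := by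
    rw [intervalIntegral.integral_congr (g := fun _ => 0) fun x hx => by
      rw [uIcc_of_le (by norm_num)] at hx
      simp only [profile, cutoff_zero_eq_zero_of_le hx.2, mul_zero]]
    simp
  have hlower : ∫ x in (9 / 5 : ℝ)..2, (-1 : ℝ) ≤ ∫ x in (9 / 5 : ℝ)..2, profile 0 x :=
    intervalIntegral.integral_mono_on (by norm_num) intervalIntegrable_const (hint _ _)
      fun x _ => by linarith [(one_add_profile_mem_Ioc (by simp : (0 : ℝ) ∈ Icc 0 1) x).1]
  rw [profileIntegral, ← intervalIntegral.integral_add_adjacent_intervals (hint 0 (9 / 5))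
    (hint _ 2), hvanish]
  norm_num at hlower ⊢
  linarith

lemma profileIntegral_one_le_neg_quarter : profileIntegral 1 ≤ -(1 / 4) := by
  have hint (u v : ℝ) : IntervalIntegrable (profile 1) volume u v :=
    (contDiff_profile 1).continuous.intervalIntegrable u v
  have hnonpos :
      ∫ x in (0 : ℝ)..(8 / 5), profile 1 x ≤ ∫ x in (0 : ℝ)..(8 / 5), (0 : ℝ) :=
    intervalIntegral.integral_mono_on (by norm_num) (hint _ _) intervalIntegrable_const
      fun x _ => by linarith [(one_add_profile_mem_Ioc (by simp : (1 : ℝ) ∈ Icc 0 1) x).2]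
  have htail : ∫ x in (8 / 5 : ℝ)..2, profile 1 x =
      log 2 / (4 * log (8 / 5)) - log 2 / (4 * log 2) - 2 / 5 := by
    rw [intervalIntegral.integral_congr (g := fun x => tailDensity x - 1) fun x hx => by
      rw [uIcc_of_le (by norm_num)] at hx
      simp only [profile, cutoff_one_eq_one_of_ge hx.1, mul_one]]
    rw [intervalIntegral.integral_sub (intervalIntegrable_tailDensity (by norm_num) one_lt_two)
      intervalIntegrable_const, integral_tailDensity (by norm_num) (by norm_num)]
    norm_num
  have hlog85 : log 2 - 1 / 4 ≤ log (8 / 5) := by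
    have h54 := log_le_sub_one_of_pos (x := 5 / 4) (by norm_num)
    rw [show (8 / 5 : ℝ) = 2 / (5 / 4) by norm_num, log_div (by norm_num) (by norm_num)]
    linarith
  have hlog2 := log_two_gt_d9
  have hratio : log 2 / (4 * log (8 / 5)) ≤ 2 / 5 := by
    rw [div_le_iff₀ (by nlinarith)]
    nlinarith
  have hquarter : log 2 / (4 * log 2) = 1 / 4 := by
    field_simp [(log_pos one_lt_two).ne']
  rw [profileIntegral, ← intervalIntegral.integral_add_adjacent_intervals (hint 0 (8 / 5))
    (hint _ 2), htail]
  simp only [intervalIntegral.integral_zero] at hnonpos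
  linarith

lemma exists_profileIntegral_eq : ∃ a ∈ Icc (0 : ℝ) 1, profileIntegral a = -(1 / 4) := by
  have hlin : profileIntegral = fun a => a * profileIntegral 1 + (1 - a) * profileIntegral 0 := by
    ext a
    have hint (b : ℝ) : IntervalIntegrable (profile b) volume 0 2 :=
      (contDiff_profile b).continuous.intervalIntegrable 0 2
    simp only [profileIntegral, profile_eq_add a]
    rw [intervalIntegral.integral_add ((hint 1).const_mul a) ((hint 0).const_mul (1 - a)),
      intervalIntegral.integral_const_mul, intervalIntegral.integral_const_mul]
  have hcont : ContinuousOn profileIntegral (Icc 0 1) := by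
    rw [hlin]
    fun_prop
  exact intermediate_value_Icc' zero_le_one hcont
    ⟨profileIntegral_one_le_neg_quarter, neg_quarter_le_profileIntegral_zero⟩

-- Equal to `1 + profile a |r|` (`secondDeriv_eq`), but written so that smoothness is evident.
noncomputable def secondDeriv (a r : ℝ) : ℝ := 1 + profile a r + profile a (-r)

noncomputable def firstDeriv (a r : ℝ) : ℝ := ∫ t in (0 : ℝ)..r, secondDeriv a t

noncomputable def weight (a r : ℝ) : ℝ := 1 + ∫ t in (0 : ℝ)..r, firstDeriv a t

lemma secondDeriv_eq (a r : ℝ) : secondDeriv a r = 1 + profile a |r| := by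
  rcases le_total 0 r with hr | hr
  · rw [secondDeriv, abs_of_nonneg hr, profile_eq_zero_of_le a (by linarith : -r ≤ 3 / 2),
      add_zero]
  · rw [secondDeriv, abs_of_nonpos hr, profile_eq_zero_of_le a (by linarith : r ≤ 3 / 2),
      add_zero]

lemma secondDeriv_neg (a r : ℝ) : secondDeriv a (-r) = secondDeriv a r := by
  rw [secondDeriv_eq, secondDeriv_eq, abs_neg]

lemma secondDeriv_abs (a r : ℝ) : secondDeriv a |r| = secondDeriv a r := by
  rw [secondDeriv_eq, secondDeriv_eq, abs_abs]

lemma contDiff_secondDeriv (a : ℝ) : ContDiff ℝ ∞ (secondDeriv a) := by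
  have := contDiff_profile a
  unfold secondDeriv
  fun_prop

lemma secondDeriv_pos {a : ℝ} (ha : a ∈ Icc 0 1) (r : ℝ) : 0 < secondDeriv a r :=
  secondDeriv_eq a r ▸ (one_add_profile_mem_Ioc ha |r|).1

lemma secondDeriv_le_one {a : ℝ} (ha : a ∈ Icc 0 1) (r : ℝ) : secondDeriv a r ≤ 1 :=
  secondDeriv_eq a r ▸ (one_add_profile_mem_Ioc ha |r|).2

lemma antitoneOn_secondDeriv {a : ℝ} (ha : a ∈ Icc 0 1) :
    AntitoneOn (secondDeriv a) (Ioi (3 / 2)) := fun x hx y hy hxy => by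
  have hx0 : 0 < x := by linarith [mem_Ioi.1 hx]
  have hy0 : 0 < y := by linarith [mem_Ioi.1 hy]
  rw [secondDeriv_eq, secondDeriv_eq, abs_of_pos hx0, abs_of_pos hy0]
  exact antitoneOn_one_add_profile ha hx hy hxy

lemma secondDeriv_eq_one_of_abs_le (a : ℝ) {r : ℝ} (hr : |r| ≤ 3 / 2) :
    secondDeriv a r = 1 := by
  rw [secondDeriv_eq, profile_eq_zero_of_le a hr, add_zero]

lemma secondDeriv_eq_tailDensity_of_ge (a : ℝ) {r : ℝ} (hr : 19 / 10 ≤ r) :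
    secondDeriv a r = tailDensity r := by
  rw [secondDeriv_eq, abs_of_pos (by linarith), profile_eq_of_ge a hr]
  ring

lemma exists_abs_iteratedDeriv_secondDeriv_le {a : ℝ} (ha : a ∈ Icc 0 1) (n : ℕ) :
    ∃ C, ∀ r, |iteratedDeriv n (secondDeriv a) r| ≤ C * secondDeriv a r := by
  obtain ⟨C, hC⟩ := exists_abs_iteratedDeriv_tailDensity_le n
  have hcont := (contDiff_secondDeriv a).continuous_iteratedDeriv n ENat.LEInfty.out
  refine exists_abs_le_mul_of_isCompact isCompact_Icc (K := Icc (-2) 2) hcont.continuousOn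
    (contDiff_secondDeriv a).continuous.continuousOn (secondDeriv_pos ha) (C := C) fun r hr => ?_
  have h2 : 2 < |r| := not_le.1 fun h => hr (abs_le.1 h)
  have htail : iteratedDeriv n (secondDeriv a) |r| = iteratedDeriv n tailDensity |r| :=
    Filter.EventuallyEq.iteratedDeriv_eq n <| (eventually_gt_nhds (by linarith)).mono
      fun x hx => secondDeriv_eq_tailDensity_of_ge a (le_of_lt hx)
  calc |iteratedDeriv n (secondDeriv a) r|
      = |iteratedDeriv n tailDensity (|r|)| := by
        rw [← htail, abs_iteratedDeriv_abs_of_even (secondDeriv_neg a)]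
    _ ≤ C * tailDensity |r| := hC _ h2.le
    _ = C * secondDeriv a r := by
        rw [← secondDeriv_eq_tailDensity_of_ge a (by linarith), secondDeriv_abs]

lemma deriv_firstDeriv (a : ℝ) : deriv (firstDeriv a) = secondDeriv a :=
  funext <| (contDiff_secondDeriv a).continuous.deriv_integral _ 0

lemma contDiff_firstDeriv (a : ℝ) : ContDiff ℝ ∞ (firstDeriv a) :=
  contDiff_infty_integral (contDiff_secondDeriv a) 0

lemma deriv_weight (a : ℝ) : deriv (weight a) = firstDeriv a :=
  (deriv_const_add' 1).trans <| funext <| (contDiff_firstDeriv a).continuous.deriv_integral _ 0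

lemma contDiff_weight (a : ℝ) : ContDiff ℝ ∞ (weight a) :=
  contDiff_const.add (contDiff_infty_integral (contDiff_firstDeriv a) 0)

lemma iteratedDeriv_add_two_weight (a : ℝ) (n : ℕ) :
    iteratedDeriv (n + 2) (weight a) = iteratedDeriv n (secondDeriv a) := by
  rw [iteratedDeriv_succ', iteratedDeriv_succ', deriv_weight, deriv_firstDeriv]

lemma firstDeriv_neg (a r : ℝ) : firstDeriv a (-r) = -firstDeriv a r :=
  integral_zero_neg_of_even (secondDeriv_neg a) r

lemma weight_neg (a r : ℝ) : weight a (-r) = weight a r := by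
  rw [weight, weight, integral_zero_neg_of_odd (firstDeriv_neg a)]

lemma firstDeriv_nonneg {a : ℝ} (ha : a ∈ Icc 0 1) {r : ℝ} (hr : 0 ≤ r) :
    0 ≤ firstDeriv a r :=
  intervalIntegral.integral_nonneg hr fun t _ => (secondDeriv_pos ha t).le

lemma weight_pos {a : ℝ} (ha : a ∈ Icc 0 1) (r : ℝ) : 0 < weight a r := by
  wlog hr : 0 ≤ r
  · rw [← weight_neg]
    exact this ha (-r) (by linarith)
  have : 0 ≤ ∫ t in (0 : ℝ)..r, firstDeriv a t :=
    intervalIntegral.integral_nonneg hr fun t ht => firstDeriv_nonneg ha ht.1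
  rw [weight]
  linarith

lemma firstDeriv_eq_self_of_le (a : ℝ) {r : ℝ} (h0 : 0 ≤ r) (h1 : r ≤ 3 / 2) :
    firstDeriv a r = r := by
  rw [firstDeriv, intervalIntegral.integral_congr (g := fun _ => 1) fun t ht => by
    rw [uIcc_of_le h0] at ht
    exact secondDeriv_eq_one_of_abs_le a (abs_le.2 ⟨by linarith [ht.1], ht.2.trans h1⟩)]
  simp

lemma firstDeriv_two {a : ℝ} (hI : profileIntegral a = -(1 / 4)) : firstDeriv a 2 = 7 / 4 := by
  rw [firstDeriv, intervalIntegral.integral_congr (g := fun t => 1 + profile a t) fun t ht => by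
    rw [uIcc_of_le zero_le_two] at ht
    rw [secondDeriv_eq, abs_of_nonneg ht.1]]
  rw [intervalIntegral.integral_add intervalIntegrable_const
    ((contDiff_profile a).continuous.intervalIntegrable 0 2), ← profileIntegral, hI]
  norm_num

lemma firstDeriv_eq_of_two_le {a : ℝ} (hI : profileIntegral a = -(1 / 4)) {r : ℝ}
    (hr : 2 ≤ r) :
    firstDeriv a r = 2 - log 2 / (4 * log r) := by
  have hint (u v : ℝ) : IntervalIntegrable (secondDeriv a) volume u v :=
    (contDiff_secondDeriv a).continuous.intervalIntegrable u v
  have htail :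
      ∫ t in (2 : ℝ)..r, secondDeriv a t = log 2 / (4 * log 2) - log 2 / (4 * log r) := by
    rw [intervalIntegral.integral_congr (g := tailDensity) fun t ht => by
      rw [uIcc_of_le hr] at ht
      exact secondDeriv_eq_tailDensity_of_ge a (by linarith [ht.1])]
    exact integral_tailDensity one_lt_two hr
  have hquarter : log 2 / (4 * log 2) = 1 / 4 := by
    field_simp [(log_pos one_lt_two).ne']
  rw [firstDeriv, ← intervalIntegral.integral_add_adjacent_intervals (hint 0 2) (hint 2 r),
    ← firstDeriv, firstDeriv_two hI, htail, hquarter]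
  ring

end CarlemanWeight

open CarlemanWeight in
/-- Existence of the Carleman weight `φ₀`: a `C⁶`, even, positive
function with `φ₀'(r) = r` on `[0, 3/2]`, `φ₀'(r) = 2 − log 2/(4 log r)` for `r ≥ 2`,
`0 < φ₀'' ≤ 1` with `φ₀''` decreasing on `(3/2, ∞)`, and a constant `c₀ > 0` with
`|φ₀⁽ᵏ⁾| ≤ c₀ φ₀''` for `k = 3, 4, 5, 6`. -/
theorem carleman_weight_exists :
    ∃ (φ₀ : ℝ → ℝ) (c₀ : ℝ), 0 < c₀ ∧
      ContDiff ℝ 6 φ₀ ∧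
      (∀ r : ℝ, φ₀ (-r) = φ₀ r) ∧
      (∀ r : ℝ, 0 < φ₀ r) ∧
      (∀ r : ℝ, 0 ≤ r → r ≤ 3 / 2 → deriv φ₀ r = r) ∧
      (∀ r : ℝ, 2 ≤ r → deriv φ₀ r = 2 - Real.log 2 / (4 * Real.log r)) ∧
      (∀ r : ℝ, 0 ≤ r → 0 < iteratedDeriv 2 φ₀ r ∧ iteratedDeriv 2 φ₀ r ≤ 1) ∧
      AntitoneOn (iteratedDeriv 2 φ₀) (Set.Ioi (3 / 2 : ℝ)) ∧
      (∀ k : ℕ, k = 3 ∨ k = 4 ∨ k = 5 ∨ k = 6 →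
        ∀ r : ℝ, |iteratedDeriv k φ₀ r| ≤ c₀ * iteratedDeriv 2 φ₀ r) := by
  obtain ⟨a, ha, hI⟩ := exists_profileIntegral_eq
  obtain ⟨c₀, hc₀, hbound⟩ := exists_pos_forall_le_mul (secondDeriv_pos ha · |>.le)
    (exists_abs_iteratedDeriv_secondDeriv_le ha) 4
  have hφ'' : iteratedDeriv 2 (weight a) = secondDeriv a := iteratedDeriv_add_two_weight a 0
  refine ⟨weight a, c₀, hc₀, (contDiff_weight a).of_le ENat.LEInfty.out, weight_neg a,
    weight_pos ha, fun r h0 h1 => ?_, fun r hr => ?_, fun r _ => ?_, ?_, fun k hk r => ?_⟩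
  · rw [deriv_weight, firstDeriv_eq_self_of_le a h0 h1]
  · rw [deriv_weight, firstDeriv_eq_of_two_le hI hr]
  · rw [hφ'']
    exact ⟨secondDeriv_pos ha r, secondDeriv_le_one ha r⟩
  · rw [hφ'']
    exact antitoneOn_secondDeriv ha
  · obtain ⟨n, hn, rfl⟩ : ∃ n ≤ 4, k = n + 2 := ⟨k - 2, by omega, by omega⟩
    rw [iteratedDeriv_add_two_weight, hφ'']
    exact hbound n hn r
end
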